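/- For every ε ∈ (0,1) there exists a finite set P ⊆ [0,1]² with |P| ≤ ⌈4/ε⌉ such that every closed axis-aligned rectangle B ⊆ [0,1]² with area(B) ≥ ε contains a point of P. In fact, the Van der Corput set {(i/n, br(i)) : i = 0,…,n-1} with n = ⌈4/ε⌉ has this property, where br(i) = Σ_{j≥0} b_j·2^{-(j+1)} for i = Σ_{j≥0} b_j·2^j with b_j ∈ {0,1} the binary digits of i. -/

import Mathlib

/-!
Choose `K` with `2 ≤ 2 ^ K (d - c) ≤ 4`; then `[c, d]` contains a dyadic interval
`[m / 2 ^ K, (m + 1) / 2 ^ K]`. Bit reversal maps the residue class of some `r < 2 ^ K` modulo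
`2 ^ K` into this interval, since `br (2 ^ K t + r) = m / 2 ^ K + br t / 2 ^ K`. With
`n = ⌈4 / ε⌉`, the area bound makes `[a n, b n]` at least `4 / (d - c) ≥ 2 ^ K` long, so it
contains an index of that residue class.
-/

open MeasureTheory

noncomputable section

/-- The binary bit-reversal of a natural number `i`: if `i = Σ_j b_j 2^j` with binary
digits `b_j ∈ {0,1}`, then `br i = Σ_j b_j / 2^(j+1)`. -/
def br (i : ℕ) : ℝ :=
  ∑' j : ℕ, (if Nat.testBit i j then (1 : ℝ) else 0) / 2 ^ (j + 1)

lemma summable_br_terms (i : ℕ) :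
    Summable fun j : ℕ => (if i.testBit j then (1 : ℝ) else 0) / 2 ^ (j + 1) := by
  refine (summable_geometric_two' 1).of_nonneg_of_le (fun j => by positivity) fun j => ?_
  rw [pow_succ, div_div, mul_comm]
  gcongr
  split_ifs <;> norm_num

lemma br_nonneg (i : ℕ) : 0 ≤ br i :=
  tsum_nonneg fun _ => by positivity

@[simp]
lemma br_zero : br 0 = 0 := by
  simp [br]

lemma br_two_mul_add (n : ℕ) {b : ℕ} (hb : b < 2) : br (2 * n + b) = (b + br n) / 2 := by
  rw [br, (summable_br_terms _).tsum_eq_zero_add, br, add_div, ← tsum_div_const]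
  congr 1
  · interval_cases b <;> simp
  · congr 1; ext j
    rw [Nat.testBit_add_one, show (2 * n + b) / 2 = n by omega, pow_succ, ← div_div]

lemma br_lt_one (i : ℕ) : br i < 1 := by
  induction i using Nat.evenOddRec with
  | h0 => simp
  | h_even n ih => rw [← add_zero (2 * n), br_two_mul_add n two_pos]; push_cast; linarith
  | h_odd n ih => rw [br_two_mul_add n one_lt_two]; push_cast; linarith

lemma br_two_pow_mul_add {K r : ℕ} (hr : r < 2 ^ K) (t : ℕ) :
    br (2 ^ K * t + r) = br r + br t / 2 ^ K := by
  induction K generalizing r with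
  | zero => simp_all
  | succ K ih =>
    have hr' : r / 2 < 2 ^ K := by omega
    have hmod : r % 2 < 2 := Nat.mod_lt r two_pos
    have key : 2 ^ (K + 1) * t + r = 2 * (2 ^ K * t + r / 2) + r % 2 := by
      rw [pow_succ, mul_comm _ 2, mul_assoc]; omega
    rw [key, br_two_mul_add _ hmod, ih hr', ← Nat.div_add_mod r 2, br_two_mul_add _ hmod,
      Nat.div_add_mod, pow_succ]
    ring

lemma exists_br_eq_div_two_pow (K : ℕ) {m : ℕ} (hm : m < 2 ^ K) :
    ∃ r < 2 ^ K, br r = m / 2 ^ K := by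
  induction K generalizing m with
  | zero => exact ⟨0, by simp_all⟩
  | succ K ih =>
    obtain ⟨r, hr, hbr⟩ := ih (Nat.mod_lt m (Nat.two_pow_pos K))
    have hq : m / 2 ^ K < 2 := by rw [pow_succ] at hm; exact Nat.div_lt_of_lt_mul (by linarith)
    refine ⟨2 * r + m / 2 ^ K, by rw [pow_succ]; omega, ?_⟩
    rw [br_two_mul_add r hq, hbr]
    conv_rhs => rw [← Nat.div_add_mod m (2 ^ K)]
    push_cast
    field_simp
    ring

lemma exists_two_le_two_pow_mul_le_four {y : ℝ} (hy : 0 < y) (hy1 : y ≤ 1) :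
    ∃ K : ℕ, 2 ≤ 2 ^ K * y ∧ 2 ^ K * y ≤ 4 := by
  obtain ⟨K, hle, hlt⟩ := exists_nat_pow_near (x := 2 / y) (y := (2 : ℝ))
    (by rw [le_div_iff₀ hy]; linarith) one_lt_two
  rw [div_lt_iff₀ hy] at hlt
  rw [le_div_iff₀ hy] at hle
  exact ⟨K + 1, hlt.le, by rw [pow_succ]; linarith⟩

lemma exists_nat_mul_add_mem_Ico {N r : ℕ} (hr : r < N) {x : ℝ} (hx : 0 ≤ x) :
    ∃ t : ℕ, x ≤ N * t + r ∧ (N * t + r : ℝ) < x + N := by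
  have hN : (0 : ℝ) < N := by exact_mod_cast (Nat.zero_le r).trans_lt hr
  have hrN : (r : ℝ) < N := by exact_mod_cast hr
  rcases le_or_gt (x - r) 0 with hxr | hxr
  · refine ⟨0, ?_, ?_⟩ <;> simp only [Nat.cast_zero, mul_zero, zero_add] <;> linarith
  · refine ⟨⌈(x - r) / N⌉₊, ?_, ?_⟩
    · have := Nat.le_ceil ((x - r) / N)
      rw [div_le_iff₀ hN] at this
      linarith
    · have := Nat.ceil_lt_add_one (div_pos hxr hN).le
      rw [← sub_lt_iff_lt_add, lt_div_iff₀ hN] at this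
      linarith

lemma exists_dyadic_Icc_subset {c d : ℝ} (hc : 0 ≤ c) (hd : d ≤ 1) {K : ℕ}
    (hK : 2 ≤ 2 ^ K * (d - c)) :
    ∃ m : ℕ, m < 2 ^ K ∧ c ≤ m / 2 ^ K ∧ (m + 1) / 2 ^ K ≤ d := by
  have hK0 : (0 : ℝ) < 2 ^ K := by positivity
  have hm := Nat.ceil_lt_add_one (mul_nonneg hc hK0.le)
  have hm1 : (⌈c * 2 ^ K⌉₊ + 1 : ℝ) ≤ d * 2 ^ K := by linarith
  refine ⟨⌈c * 2 ^ K⌉₊, ?_, ?_, ?_⟩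
  · have : (⌈c * 2 ^ K⌉₊ : ℝ) < 2 ^ K := by nlinarith
    exact_mod_cast this
  · rw [le_div_iff₀ hK0]; exact Nat.le_ceil _
  · rwa [div_le_iff₀ hK0]

lemma le_mul_of_ofReal_le_volume_Icc_prod_Icc {ε a b c d : ℝ} (hε : 0 < ε)
    (h : ENNReal.ofReal ε ≤ volume (Set.Icc a b ×ˢ Set.Icc c d)) :
    a < b ∧ c < d ∧ ε ≤ (b - a) * (d - c) := by
  rw [Measure.volume_eq_prod, Measure.prod_prod, Real.volume_Icc, Real.volume_Icc] at h
  have hpos := (ENNReal.ofReal_pos.mpr hε).trans_le h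
  have hba : 0 < b - a := ENNReal.ofReal_pos.mp (pos_of_mul_pos_left hpos zero_le)
  have hdc : 0 < d - c := ENNReal.ofReal_pos.mp (pos_of_mul_pos_right hpos zero_le)
  rw [← ENNReal.ofReal_mul hba.le, ENNReal.ofReal_le_ofReal_iff (by positivity)] at h
  exact ⟨by linarith, by linarith, h⟩

lemma exists_br_mem_Icc_of_two_le_two_pow_mul {c d : ℝ} (hc : 0 ≤ c) (hd : d ≤ 1) {K : ℕ}
    (hK : 2 ≤ 2 ^ K * (d - c)) {x : ℝ} (hx : 0 ≤ x) :
    ∃ i : ℕ, x ≤ i ∧ (i : ℝ) < x + 2 ^ K ∧ br i ∈ Set.Icc c d := by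
  obtain ⟨m, hm, hcm, hmd⟩ := exists_dyadic_Icc_subset hc hd hK
  obtain ⟨r, hr, hbr⟩ := exists_br_eq_div_two_pow K hm
  obtain ⟨t, hxt, htx⟩ := exists_nat_mul_add_mem_Ico (Nat.cast_lt.mpr hr) hx
  have hbrt : br t / 2 ^ K ≤ 1 / 2 ^ K := by gcongr; exact (br_lt_one t).le
  refine ⟨2 ^ K * t + r, by push_cast; exact_mod_cast hxt, by push_cast; exact_mod_cast htx, ?_⟩
  rw [br_two_pow_mul_add hr, hbr]
  constructor
  · linarith [div_nonneg (br_nonneg t) (pow_nonneg zero_le_two K)]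
  · rw [add_div] at hmd
    linarith

/-- The Van der Corput set `{(i/n, br i) : i = 0, …, n-1}` with `n = ⌈4/ε⌉` is a set of at
most `⌈4/ε⌉` points of `[0,1]²` meeting every closed axis-aligned rectangle `B ⊆ [0,1]²`
of area at least `ε`. -/
theorem van_der_corput_net (ε : ℝ) (hε : ε ∈ Set.Ioo (0 : ℝ) 1) :
    ∃ P : Finset (ℝ × ℝ),
      P = (Finset.range ⌈(4 : ℝ) / ε⌉₊).image
          (fun i : ℕ => ((i : ℝ) / (⌈(4 : ℝ) / ε⌉₊ : ℝ), br i)) ∧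
      ↑P ⊆ Set.Icc (0 : ℝ) 1 ×ˢ Set.Icc (0 : ℝ) 1 ∧
      P.card ≤ ⌈(4 : ℝ) / ε⌉₊ ∧
      ∀ a b c d : ℝ,
        Set.Icc a b ×ˢ Set.Icc c d ⊆ Set.Icc (0 : ℝ) 1 ×ˢ Set.Icc (0 : ℝ) 1 →
        ENNReal.ofReal ε ≤ volume (Set.Icc a b ×ˢ Set.Icc c d) →
        ∃ p ∈ P, p ∈ Set.Icc a b ×ˢ Set.Icc c d := by
  set n := ⌈(4 : ℝ) / ε⌉₊
  have hεn : 4 ≤ ε * n := (div_le_iff₀' hε.1).mp (Nat.le_ceil _)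
  have hn : (0 : ℝ) < n := pos_of_mul_pos_right (by linarith) hε.1.le
  refine ⟨_, rfl, ?_, Finset.card_image_le.trans (Finset.card_range n).le, ?_⟩
  · simp only [Finset.coe_image, Set.image_subset_iff, Finset.coe_range]
    intro i hi
    have hin : (i : ℝ) ≤ n := by exact_mod_cast (Set.mem_Iio.mp hi).le
    exact ⟨⟨by positivity, by rwa [div_le_one hn]⟩, br_nonneg i, (br_lt_one i).le⟩
  intro a b c d hsub hvol
  obtain ⟨hab, hcd, harea⟩ := le_mul_of_ofReal_le_volume_Icc_prod_Icc hε.1 hvol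
  obtain ⟨⟨ha, -⟩, hc, -⟩ : (0 ≤ a ∧ a ≤ 1) ∧ 0 ≤ c ∧ c ≤ 1 :=
    hsub (Set.mk_mem_prod (Set.left_mem_Icc.mpr hab.le) (Set.left_mem_Icc.mpr hcd.le))
  obtain ⟨⟨-, hb⟩, -, hd⟩ : (0 ≤ b ∧ b ≤ 1) ∧ 0 ≤ d ∧ d ≤ 1 :=
    hsub (Set.mk_mem_prod (Set.right_mem_Icc.mpr hab.le) (Set.right_mem_Icc.mpr hcd.le))
  obtain ⟨K, hK2, hK4⟩ := exists_two_le_two_pow_mul_le_four (sub_pos.mpr hcd) (by linarith)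
  have hKn : (2 : ℝ) ^ K ≤ (b - a) * n := by
    refine le_of_mul_le_mul_right ?_ (sub_pos.mpr hcd)
    calc 2 ^ K * (d - c) ≤ ε * n := hK4.trans hεn
      _ ≤ (b - a) * (d - c) * n := by gcongr
      _ = (b - a) * n * (d - c) := by ring
  obtain ⟨i, hai, hib, hbri⟩ := exists_br_mem_Icc_of_two_le_two_pow_mul hc hd hK2
    (x := a * n) (by positivity)
  have hib' : (i : ℝ) < b * n := by linarith
  have hin : i < n := by exact_mod_cast hib'.trans_le (mul_le_of_le_one_left hn.le hb)
  refine ⟨_, Finset.mem_image_of_mem _ (Finset.mem_range.mpr hin), ⟨?_, ?_⟩, hbri⟩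
  · rwa [le_div_iff₀ hn]
  · rw [div_le_iff₀ hn]; exact hib'.le
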